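/- The origin (s, x) = (0, 0) ∈ ℝ × ℝ^{N−2} is an equilibrium of the desingularized vector field (extended by the C¹ extension h̄ of the exponential terms), and the Jacobian matrix of the desingularized vector field at the origin equals −λ times the identity matrix; in particular, for λ > 0 the origin is a hyperbolic, asymptotically stable equilibrium. -/
import Mathlib


/-- Component values with conventions `x_{N/2} := 1`, `x_0 = x_N := 0`;
the remaining components are stored in `v : Fin (N-1) → ℝ` as `x_i = v (i-1)`. -/
noncomputable def Xc (N : ℕ) (v : Fin (N - 1) → ℝ) (i : ℕ) : ℝ :=
  if i = N / 2 then 1 else if h : 1 ≤ i ∧ i - 1 < N - 1 then v ⟨i - 1, h.2⟩ else 0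

/-- The `s`-component, stored at index `N/2 - 1`. -/
noncomputable def sc (N : ℕ) (v : Fin (N - 1) → ℝ) : ℝ :=
  if h : N / 2 - 1 < N - 1 then v ⟨N / 2 - 1, h⟩ else 0

/-- `Δ_i = N²(x_{i-1} - 2x_i + x_{i+1})`. -/
noncomputable def Δc (N : ℕ) (v : Fin (N - 1) → ℝ) (i : ℕ) : ℝ :=
  (N : ℝ) ^ 2 * (Xc N v (i - 1) - 2 * Xc N v i + Xc N v (i + 1))

/-- `C¹` extension by zero of `s⁻¹ e^{-1/s^m}`. -/
noncomputable def hbar1 (m : ℕ) (s : ℝ) : ℝ :=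
  if 0 < s then s⁻¹ * Real.exp (-1 / s ^ m) else 0

/-- Extension by zero of `e^{-α/s^m}`. -/
noncomputable def hbar0 (m : ℕ) (α s : ℝ) : ℝ :=
  if 0 < s then Real.exp (-α / s ^ m) else 0

/-- The desingularized vector field (extended through the horizon `{s ≤ 0}` by zero):
`ṡ = -e^{-1/s^m} Δ_{N/2} - λ s`,
`ẋ_i = -x_i s⁻¹e^{-1/s^m} Δ_{N/2} - λ x_i + s⁻¹e^{-1/s^m} Δ_i + λ e^{-(1-x_i^m)/s^m}`. -/
noncomputable def Fc (N m : ℕ) (lam : ℝ) (v : Fin (N - 1) → ℝ) : Fin (N - 1) → ℝ :=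
  fun j =>
    if (j : ℕ) + 1 = N / 2 then
      -(hbar0 m 1 (sc N v)) * Δc N v (N / 2) - lam * sc N v
    else
      -Xc N v ((j : ℕ) + 1) * hbar1 m (sc N v) * Δc N v (N / 2)
        - lam * Xc N v ((j : ℕ) + 1)
        + hbar1 m (sc N v) * Δc N v ((j : ℕ) + 1)
        + lam * hbar0 m (1 - Xc N v ((j : ℕ) + 1) ^ m) (sc N v)

theorem exp_neg_le2' (t : ℝ) (ht : 0 < t) : Real.exp (-t) ≤ 4 / t ^ 2 := by
  have h1 := Real.add_one_le_exp (t/2)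
  have h2 : Real.exp t = Real.exp (t/2) ^ 2 := by
    rw [← Real.exp_nat_mul]; push_cast; ring_nf
  have h3 : t^2/4 ≤ Real.exp t := by nlinarith [Real.exp_pos (t/2)]
  rw [Real.exp_neg, inv_le_comm₀ (Real.exp_pos t) (by positivity), inv_div]
  linarith

theorem exp_neg_le3' (t : ℝ) (ht : 0 < t) : Real.exp (-t) ≤ 27 / t ^ 3 := by
  have h1 := Real.add_one_le_exp (t/3)
  have h2 : Real.exp t = Real.exp (t/3) ^ 3 := by
    rw [← Real.exp_nat_mul]; push_cast; ring_nf
  have h5 : (t/3+1)^3 ≤ Real.exp (t/3) ^ 3 := by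
    apply pow_le_pow_left₀ (by positivity) (by linarith)
  have h3 : t^3/27 ≤ Real.exp t := by nlinarith
  rw [Real.exp_neg, inv_le_comm₀ (Real.exp_pos t) (by positivity), inv_div]
  linarith

theorem hbar0_bound' (m : ℕ) (hm : 0 < m) (α s : ℝ) (hα : 1/2 ≤ α) (hs : |s| ≤ 1) :
    |hbar0 m α s| ≤ 16 * s ^ 2 := by
  unfold hbar0
  split
  · rename_i h
    have hs1 : s ≤ 1 := (abs_le.mp hs).2
    have hsm : s ^ m ≤ s := by
      calc s ^ m ≤ s ^ 1 := pow_le_pow_of_le_one h.le hs1 hm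
      _ = s := pow_one s
    have hsmpos : 0 < s ^ m := pow_pos h m
    have h1 : 1/(2*s) ≤ α / s ^ m := by
      rw [div_le_div_iff₀ (by linarith) hsmpos]; nlinarith
    have h2 : Real.exp (-α / s ^ m) ≤ Real.exp (-(1/(2*s))) := by
      rw [Real.exp_le_exp, neg_div]; linarith
    have h3 : Real.exp (-(1/(2*s))) ≤ 4 / (1/(2*s)) ^ 2 :=
      exp_neg_le2' _ (by positivity)
    have h4 : 4 / (1/(2*s)) ^ 2 = 16 * s ^ 2 := by field_simp; ring
    rw [abs_of_nonneg (Real.exp_pos _).le]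
    linarith
  · simp; positivity

theorem hbar1_bound' (m : ℕ) (hm : 0 < m) (s : ℝ) (hs : |s| ≤ 1) :
    |hbar1 m s| ≤ 27 * s ^ 2 := by
  unfold hbar1
  split
  · rename_i h
    have hs1 : s ≤ 1 := (abs_le.mp hs).2
    have hsm : s ^ m ≤ s := by
      calc s ^ m ≤ s ^ 1 := pow_le_pow_of_le_one h.le hs1 hm
      _ = s := pow_one s
    have hsmpos : 0 < s ^ m := pow_pos h m
    have h1 : 1/s ≤ 1 / s ^ m := by
      rw [div_le_div_iff₀ h hsmpos]; nlinarith
    have h2 : Real.exp (-1 / s ^ m) ≤ Real.exp (-(1/s)) := by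
      rw [Real.exp_le_exp, neg_div]; linarith
    have h3 : Real.exp (-(1/s)) ≤ 27 / (1/s) ^ 3 := exp_neg_le3' _ (by positivity)
    have h4 : 27 / (1/s) ^ 3 = 27 * s ^ 3 := by field_simp
    rw [abs_of_nonneg (by positivity)]
    calc s⁻¹ * Real.exp (-1 / s ^ m) ≤ s⁻¹ * (27 * s ^ 3) := by
          apply mul_le_mul_of_nonneg_left (by linarith) (by positivity)
      _ = 27 * s ^ 2 * (s⁻¹ * s) := by ring
      _ = 27 * s ^ 2 := by rw [inv_mul_cancel₀ h.ne']; ring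
  · simp; positivity

theorem sc_eq' (N : ℕ) (hN : 4 ≤ N) (v : Fin (N - 1) → ℝ) :
    sc N v = v ⟨N / 2 - 1, by omega⟩ := dif_pos (by omega)

theorem Xc_eq' (N : ℕ) (hN : 4 ≤ N) (v : Fin (N - 1) → ℝ) (j : Fin (N - 1))
    (h : (j : ℕ) + 1 ≠ N / 2) : Xc N v ((j : ℕ) + 1) = v j := by
  unfold Xc
  rw [if_neg h, dif_pos ⟨by omega, by omega⟩]
  exact congrArg v (Fin.ext (by simp))

theorem Xc_bound' (N : ℕ) (v : Fin (N - 1) → ℝ) (hv : ‖v‖ ≤ 1) (i : ℕ) :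
    |Xc N v i| ≤ 1 := by
  unfold Xc
  split
  · simp
  · split
    · calc |v _| = ‖v _‖ := (Real.norm_eq_abs _).symm
        _ ≤ ‖v‖ := norm_le_pi_norm v _
        _ ≤ 1 := hv
    · simp

theorem Δc_bound' (N : ℕ) (v : Fin (N - 1) → ℝ) (hv : ‖v‖ ≤ 1) (i : ℕ) :
    |Δc N v i| ≤ 4 * (N : ℝ) ^ 2 := by
  unfold Δc
  rw [abs_mul]
  have h1 := Xc_bound' N v hv (i - 1)
  have h2 := Xc_bound' N v hv i
  have h3 := Xc_bound' N v hv (i + 1)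
  have habs : |Xc N v (i-1) - 2 * Xc N v i + Xc N v (i+1)| ≤ 4 := by
    have := abs_le.mp h1; have := abs_le.mp h2; have := abs_le.mp h3
    rw [abs_le]; constructor <;> linarith
  have : |(N:ℝ)^2| = (N:ℝ)^2 := abs_of_nonneg (by positivity)
  rw [this]
  nlinarith [sq_nonneg (N:ℝ)]

theorem Fc_zero' (N m : ℕ) (hN : 4 ≤ N) (lam : ℝ) : Fc N m lam 0 = 0 := by
  funext j
  have hs0 : sc N (0 : Fin (N-1) → ℝ) = 0 := by rw [sc_eq' N hN]; simp
  have h0 : ∀ α : ℝ, hbar0 m α 0 = 0 := by intro α; simp [hbar0]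
  have h1 : hbar1 m 0 = 0 := by simp [hbar1]
  unfold Fc
  split
  · rw [hs0, h0]; simp
  · rename_i hc
    rw [Xc_eq' N hN 0 j hc, hs0, h0, h1]
    simp

theorem comp_bound' (N m : ℕ) (hN : 4 ≤ N) (hm : 0 < m) (lam : ℝ) (hlam : 0 < lam)
    (v : Fin (N - 1) → ℝ) (hv : ‖v‖ ≤ 1/2) (j : Fin (N - 1)) :
    |Fc N m lam v j + lam * v j| ≤ (200 * (N : ℝ) ^ 2 + 16 * lam) * ‖v‖ ^ 2 := by
  have hv1 : ‖v‖ ≤ 1 := by linarith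
  have hvnn : (0:ℝ) ≤ ‖v‖ := norm_nonneg v
  have habs : ∀ i, |v i| ≤ ‖v‖ := fun i => by
    rw [← Real.norm_eq_abs]; exact norm_le_pi_norm v i
  have hs : |sc N v| ≤ ‖v‖ := by rw [sc_eq' N hN]; exact habs _
  have hs1 : |sc N v| ≤ 1 := le_trans hs hv1
  have hsq : (sc N v) ^ 2 ≤ ‖v‖ ^ 2 := by
    rw [← sq_abs]; exact pow_le_pow_left₀ (abs_nonneg _) hs 2
  have hΔ := Δc_bound' N v hv1
  have hh1 : |hbar1 m (sc N v)| ≤ 27 * ‖v‖ ^ 2 :=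
    le_trans (hbar1_bound' m hm _ hs1) (by nlinarith)
  have hNsq : (0:ℝ) ≤ (N:ℝ)^2 := by positivity
  unfold Fc
  split
  · rename_i hc
    have hsj : sc N v = v j := by
      rw [sc_eq' N hN]; congr 1; exact Fin.ext (by simp; omega)
    have hh0 : |hbar0 m 1 (sc N v)| ≤ 16 * ‖v‖ ^ 2 :=
      le_trans (hbar0_bound' m hm 1 _ (by norm_num) hs1) (by nlinarith)
    have he : -(hbar0 m 1 (sc N v)) * Δc N v (N / 2) - lam * sc N v + lam * v j
        = -(hbar0 m 1 (sc N v) * Δc N v (N / 2)) := by rw [hsj]; ring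
    rw [he, abs_neg, abs_mul]
    have := mul_le_mul hh0 (hΔ (N/2)) (abs_nonneg _) (by positivity)
    nlinarith [mul_nonneg hlam.le (sq_nonneg ‖v‖)]
  · rename_i hc
    rw [Xc_eq' N hN v j hc]
    have hvj : |v j| ≤ 1/2 := le_trans (habs j) hv
    have hα : 1/2 ≤ 1 - (v j) ^ m := by
      have h1 : |(v j) ^ m| ≤ (1/2 : ℝ) ^ m := by
        rw [abs_pow]; exact pow_le_pow_left₀ (abs_nonneg _) hvj m
      have h2 : (1/2 : ℝ) ^ m ≤ 1/2 := by
        calc (1/2 : ℝ) ^ m ≤ (1/2 : ℝ) ^ 1 :=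
          pow_le_pow_of_le_one (by norm_num) (by norm_num) hm
        _ = 1/2 := pow_one _
      have := (abs_le.mp h1).2
      linarith
    have hh0 : |hbar0 m (1 - (v j) ^ m) (sc N v)| ≤ 16 * ‖v‖ ^ 2 :=
      le_trans (hbar0_bound' m hm _ _ hα hs1) (by nlinarith)
    have he : -(v j) * hbar1 m (sc N v) * Δc N v (N / 2) - lam * v j
        + hbar1 m (sc N v) * Δc N v ((j : ℕ) + 1)
        + lam * hbar0 m (1 - v j ^ m) (sc N v) + lam * v j
        = -(v j * hbar1 m (sc N v) * Δc N v (N / 2))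
          + hbar1 m (sc N v) * Δc N v ((j : ℕ) + 1)
          + lam * hbar0 m (1 - v j ^ m) (sc N v) := by ring
    rw [he]
    have t1 : |v j * hbar1 m (sc N v) * Δc N v (N / 2)| ≤ (1/2) * (27 * ‖v‖^2) * (4 * (N:ℝ)^2) := by
      rw [abs_mul, abs_mul]
      apply mul_le_mul ?_ (hΔ _) (abs_nonneg _) (by positivity)
      exact mul_le_mul hvj hh1 (abs_nonneg _) (by norm_num)
    have t2 : |hbar1 m (sc N v) * Δc N v ((j:ℕ)+1)| ≤ (27 * ‖v‖^2) * (4 * (N:ℝ)^2) := by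
      rw [abs_mul]
      exact mul_le_mul hh1 (hΔ _) (abs_nonneg _) (by positivity)
    have t3 : |lam * hbar0 m (1 - v j ^ m) (sc N v)| ≤ lam * (16 * ‖v‖^2) := by
      rw [abs_mul, abs_of_pos hlam]
      exact mul_le_mul_of_nonneg_left hh0 hlam.le
    calc |(-(v j * hbar1 m (sc N v) * Δc N v (N / 2))
          + hbar1 m (sc N v) * Δc N v ((j : ℕ) + 1)
          + lam * hbar0 m (1 - v j ^ m) (sc N v))|
        ≤ |(-(v j * hbar1 m (sc N v) * Δc N v (N / 2))
          + hbar1 m (sc N v) * Δc N v ((j : ℕ) + 1))|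
          + |lam * hbar0 m (1 - v j ^ m) (sc N v)| := abs_add_le _ _
      _ ≤ |(-(v j * hbar1 m (sc N v) * Δc N v (N / 2)))|
          + |hbar1 m (sc N v) * Δc N v ((j : ℕ) + 1)|
          + |lam * hbar0 m (1 - v j ^ m) (sc N v)| := by
            have := abs_add_le (-(v j * hbar1 m (sc N v) * Δc N v (N / 2)))
              (hbar1 m (sc N v) * Δc N v ((j : ℕ) + 1))
            linarith
      _ ≤ (1/2) * (27 * ‖v‖^2) * (4 * (N:ℝ)^2) + (27 * ‖v‖^2) * (4 * (N:ℝ)^2)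
          + lam * (16 * ‖v‖^2) := by rw [abs_neg]; linarith
      _ ≤ (200 * (N : ℝ) ^ 2 + 16 * lam) * ‖v‖ ^ 2 := by nlinarith


/-- The origin is an equilibrium of the desingularized vector field and its Jacobian there
is `-λ·I`; in particular for `λ > 0` the origin is hyperbolic and asymptotically stable. -/
theorem stmt14 (N m : ℕ) (hN : 4 ≤ N) (hNe : Even N) (hm : 0 < m)
    (lam : ℝ) (hlam : 0 < lam) :
    Fc N m lam 0 = 0 ∧
    HasFDerivAt (Fc N m lam)
      ((-lam) • ContinuousLinearMap.id ℝ (Fin (N - 1) → ℝ)) 0 := by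
  refine ⟨Fc_zero' N m hN lam, ?_⟩
  rw [hasFDerivAt_iff_isLittleO_nhds_zero]
  set C : ℝ := 200 * (N : ℝ) ^ 2 + 16 * lam with hC
  have hCpos : 0 < C := by positivity
  have key : ∀ v : Fin (N-1) → ℝ, ‖v‖ ≤ 1/2 →
      ‖Fc N m lam v - (-lam) • v‖ ≤ C * ‖v‖ ^ 2 := by
    intro v hv
    rw [pi_norm_le_iff_of_nonneg (by positivity)]
    intro j
    have : (Fc N m lam v - (-lam) • v) j = Fc N m lam v j + lam * v j := by
      simp [Pi.sub_apply, Pi.smul_apply, smul_eq_mul]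
    rw [this, Real.norm_eq_abs]
    exact comp_bound' N m hN hm lam hlam v hv j
  rw [Asymptotics.isLittleO_iff]
  intro c hc
  have hδ : 0 < min (1/2) (c / C) := lt_min (by norm_num) (by positivity)
  filter_upwards [Metric.ball_mem_nhds (0 : Fin (N-1) → ℝ) hδ] with v hv
  rw [Metric.mem_ball, dist_zero_right] at hv
  have hv2 : ‖v‖ ≤ 1/2 := le_trans hv.le (min_le_left _ _)
  have hv3 : ‖v‖ ≤ c / C := le_trans hv.le (min_le_right _ _)
  have hfz : Fc N m lam 0 = 0 := Fc_zero' N m hN lam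
  have heq : Fc N m lam (0 + v) - Fc N m lam 0 - ((-lam) • ContinuousLinearMap.id ℝ (Fin (N - 1) → ℝ)) v
      = Fc N m lam v - (-lam) • v := by
    rw [zero_add, hfz, sub_zero]
    simp
  rw [heq]
  calc ‖Fc N m lam v - (-lam) • v‖ ≤ C * ‖v‖ ^ 2 := key v hv2
    _ = C * ‖v‖ * ‖v‖ := by ring
    _ ≤ C * (c / C) * ‖v‖ := by
        apply mul_le_mul_of_nonneg_right ?_ (norm_nonneg v)
        exact mul_le_mul_of_nonneg_left hv3 hCpos.le
    _ = c * ‖v‖ := by field_simp
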